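/- Let S be a maximal independent set and D a 3-subset of S. If A = {a, b} ⊆ F(D) with a ≠ b is a maximal independent set of G[D ∪ F(D)], then not both a and b are 1-tight; that is, at least one of a, b has tightness at least 2 with respect to S. -/
import Mathlib


open Finset

variable {V : Type*}

/-- `S` is an independent set in `G`: no two vertices of `S` are adjacent. -/
def Indep (G : SimpleGraph V) (S : Finset V) : Prop :=
  ∀ u ∈ S, ∀ v ∈ S, ¬ G.Adj u v

/-- `S` is a dominating set in `G`: every vertex outside `S` has a neighbor in `S`. -/
def Dominating (G : SimpleGraph V) (S : Finset V) : Prop :=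
  ∀ v, v ∉ S → ∃ u ∈ S, G.Adj u v

/-- `S` is a maximal independent set (w.r.t. set inclusion) in `G`. -/
def MaxIndep (G : SimpleGraph V) (S : Finset V) : Prop :=
  Indep G S ∧ ∀ T, Indep G T → S ⊆ T → T = S

/-- The tightness of a vertex `v` w.r.t. a solution `S`: the number of neighbors of `v` in `S`. -/
def tight [Fintype V] [DecidableEq V] (G : SimpleGraph V) [DecidableRel G.Adj]
    (S : Finset V) (v : V) : ℕ :=
  (G.neighborFinset v ∩ S).card

/-- `F(D)`: the non-solution vertices all of whose solution neighbors lie in `D`. -/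
def FD [Fintype V] [DecidableEq V] (G : SimpleGraph V) [DecidableRel G.Adj]
    (S D : Finset V) : Finset V :=
  Finset.univ.filter (fun v => v ∉ S ∧ G.neighborFinset v ∩ S ⊆ D)

/-- `A` is a maximal independent set of the subgraph of `G` induced on `W`. -/
def MaxIndepIn (G : SimpleGraph V) (W A : Finset V) : Prop :=
  A ⊆ W ∧ Indep G A ∧ ∀ T ⊆ W, Indep G T → A ⊆ T → T = A

/-- `S` is `k`-minimal: no `k`-swap yields a strictly smaller solution. -/
def KMinimal [Fintype V] [DecidableEq V] (G : SimpleGraph V) (S : Finset V) (k : ℕ) : Prop :=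
  ¬ ∃ D A : Finset V, D ⊆ S ∧ D.card = k ∧ A ⊆ Finset.univ \ S ∧ A.Nonempty ∧
      MaxIndep G ((S \ D) ∪ A) ∧ ((S \ D) ∪ A).card < S.card

lemma maxIndep_dominating [DecidableEq V] (G : SimpleGraph V) (S : Finset V)
    (hS : MaxIndep G S) : Dominating G S := by
  intro v hv
  by_contra h
  push_neg at h
  have hind : Indep G (insert v S) := by
    intro u hu w hw
    simp only [Finset.mem_insert] at hu hw
    rcases hu with rfl | hu <;> rcases hw with rfl | hw
    · exact G.irrefl
    · intro hadj; exact h w hw hadj.symm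
    · intro hadj; exact h u hu hadj
    · exact hS.1 u hu w hw
  have := hS.2 _ hind (Finset.subset_insert _ _)
  exact hv (this ▸ Finset.mem_insert_self v S)

theorem stmt_12 [Fintype V] [DecidableEq V] (G : SimpleGraph V) [DecidableRel G.Adj]
    (S D : Finset V) (a b : V) (hS : MaxIndep G S) (hD : D ⊆ S) (hD3 : D.card = 3)
    (hab : a ≠ b) (ha : a ∈ FD G S D) (hb : b ∈ FD G S D)
    (hAmax : MaxIndepIn G (D ∪ FD G S D) {a, b}) :
    2 ≤ tight G S a ∨ 2 ≤ tight G S b := by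
  by_contra hcon
  push_neg at hcon
  obtain ⟨h1, h2⟩ := hcon
  have ha' := ha
  have hb' := hb
  simp only [FD, Finset.mem_filter] at ha' hb'
  obtain ⟨-, haS, haD⟩ := ha'
  obtain ⟨-, hbS, hbD⟩ := hb'
  have htight : ∀ v : V, v ∉ S → tight G S v = 1 → ∃ d, G.neighborFinset v ∩ S = {d} := by
    intro v _ hv; exact Finset.card_eq_one.mp hv
  have hta : tight G S a = 1 := by
    obtain ⟨u, hu, hadj⟩ := maxIndep_dominating G S hS a haS
    have hmem : u ∈ G.neighborFinset a ∩ S := by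
      simp [SimpleGraph.mem_neighborFinset, hadj.symm, hu]
    have : 1 ≤ tight G S a := Finset.card_pos.mpr ⟨u, hmem⟩
    omega
  have htb : tight G S b = 1 := by
    obtain ⟨u, hu, hadj⟩ := maxIndep_dominating G S hS b hbS
    have hmem : u ∈ G.neighborFinset b ∩ S := by
      simp [SimpleGraph.mem_neighborFinset, hadj.symm, hu]
    have : 1 ≤ tight G S b := Finset.card_pos.mpr ⟨u, hmem⟩
    omega
  obtain ⟨da, hda⟩ := htight a haS hta
  obtain ⟨db, hdb⟩ := htight b hbS htb
  have hnotsub : ¬ D ⊆ ({da, db} : Finset V) := by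
    intro hsub
    have := Finset.card_le_card hsub
    have h2' : ({da, db} : Finset V).card ≤ 2 :=
      (Finset.card_insert_le _ _).trans (by simp)
    omega
  obtain ⟨d, hdD, hdn⟩ := Finset.not_subset.mp hnotsub
  simp only [Finset.mem_insert, Finset.mem_singleton, not_or] at hdn
  have hdS : d ∈ S := hD hdD
  have hdna : ¬ G.Adj d a := by
    intro hadj
    have : d ∈ G.neighborFinset a ∩ S := by
      simp [SimpleGraph.mem_neighborFinset, hadj.symm, hdS]
    rw [hda] at this
    exact hdn.1 (Finset.mem_singleton.mp this)
  have hdnb : ¬ G.Adj d b := by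
    intro hadj
    have : d ∈ G.neighborFinset b ∩ S := by
      simp [SimpleGraph.mem_neighborFinset, hadj.symm, hdS]
    rw [hdb] at this
    exact hdn.2 (Finset.mem_singleton.mp this)
  have habadj : ¬ G.Adj a b := hAmax.2.1 a (by simp) b (by simp)
  have hT : (insert d {a, b} : Finset V) = {a, b} := by
    apply hAmax.2.2
    · intro x hx
      simp only [Finset.mem_insert, Finset.mem_singleton] at hx
      rcases hx with rfl | rfl | rfl
      · exact Finset.mem_union_left _ hdD
      · exact Finset.mem_union_right _ ha
      · exact Finset.mem_union_right _ hb
    · intro u hu w hw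
      simp only [Finset.mem_insert, Finset.mem_singleton] at hu hw
      rcases hu with rfl | rfl | rfl <;> rcases hw with rfl | rfl | rfl
      · exact G.irrefl
      · exact hdna
      · exact hdnb
      · intro hadj; exact hdna hadj.symm
      · exact G.irrefl
      · exact habadj
      · intro hadj; exact hdnb hadj.symm
      · intro hadj; exact habadj hadj.symm
      · exact G.irrefl
    · exact Finset.subset_insert _ _
  have hdmem : d ∈ ({a, b} : Finset V) := hT ▸ Finset.mem_insert_self d {a, b}
  simp only [Finset.mem_insert, Finset.mem_singleton] at hdmem
  rcases hdmem with rfl | rfl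
  · exact haS hdS
  · exact hbS hdS
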